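/- Let λ be a left weight and ρ a right weight on a countable directed graph G, with λ left-bounded at w ∈ G⁺ and ρ right-bounded at u ∈ G⁺. Then the commutation relation R_{ρ,u} L_{λ,w} = L_{λ,w} R_{ρ,u} holds on ℓ²(G⁺) if and only if the pair (λ,ρ) satisfies the commuting square condition at (w,u): ρ(wv, u) λ(v, w) = λ(vu, w) ρ(v, u) for every v ∈ G⁺ with wvu ∈ G⁺. -/

import Mathlib

open scoped Classical

noncomputable section

/-- The set of all finite paths of a directed graph (quiver), including
vertices as paths of length `0`. -/
def PathIn (V : Type u) [Quiver.{w} V] : Type (max u w) :=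
  Σ a b : V, Quiver.Path a b

namespace PathIn

variable {V : Type u} [Quiver.{w} V]

/-- The source vertex `s(p)` of a path. -/
def src (p : PathIn V) : V := p.1

/-- The range vertex `r(p)` of a path. -/
def tgt (p : PathIn V) : V := p.2.1

/-- The length `|p|` of a path. -/
def length (p : PathIn V) : ℕ := p.2.2.length

/-- A vertex, regarded as a path of length `0`. -/
def ofVertex (x : V) : PathIn V := ⟨x, x, Quiver.Path.nil⟩

/-- A path which is a single edge. -/
def IsEdge (p : PathIn V) : Prop := p.length = 1

/-- `Comp w v`: the product `wv` (first traverse `v`, then `w`) is a path,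
i.e. `s(w) = r(v)`. -/
def Comp (w v : PathIn V) : Prop := w.src = v.tgt

/-- The product path `wv` (first traverse `v`, then `w`); junk value `w` if
not composable. -/
def mul (w v : PathIn V) : PathIn V :=
  if h : w.src = v.tgt then ⟨v.1, w.2.1, v.2.2.comp (w.2.2.cast h rfl)⟩ else w

end PathIn

variable {V : Type u} [Quiver.{w} V]

/-- A left weight on the path semigroupoid of `G`: nonnegative, nonzero
exactly on composable pairs, and satisfying the left cocycle condition. -/
def IsLeftWeight (l : PathIn V → PathIn V → ℝ) : Prop :=
  (∀ v w, 0 ≤ l v w) ∧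
  (∀ v w, 0 < l v w ↔ PathIn.Comp w v) ∧
  (∀ v w₁ w₂, PathIn.Comp w₁ v → PathIn.Comp w₂ w₁ →
    l v (PathIn.mul w₂ w₁) = l (PathIn.mul w₁ v) w₂ * l v w₁)

/-- A right weight on the path semigroupoid of `G`. -/
def IsRightWeight (r : PathIn V → PathIn V → ℝ) : Prop :=
  (∀ v u, 0 ≤ r v u) ∧
  (∀ v u, 0 < r v u ↔ PathIn.Comp v u) ∧
  (∀ v u₁ u₂, PathIn.Comp v u₁ → PathIn.Comp u₁ u₂ →
    r v (PathIn.mul u₁ u₂) = r (PathIn.mul v u₁) u₂ * r v u₁)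

/-- A path weight: strictly positive, equal to `1` on vertices. -/
def IsPathWeight (α : PathIn V → ℝ) : Prop :=
  (∀ p, 0 < α p) ∧ (∀ x : V, α (PathIn.ofVertex x) = 1)

/-- The left weight `λ_α` associated with a path weight `α`. -/
def leftOf (α : PathIn V → ℝ) (v w : PathIn V) : ℝ :=
  if PathIn.Comp w v then α (PathIn.mul w v) / α v else 0

/-- The right weight `ρ_α` associated with a path weight `α`. -/
def rightOf (α : PathIn V → ℝ) (v u : PathIn V) : ℝ :=
  if PathIn.Comp v u then α (PathIn.mul v u) / α v else 0

/-- The path weight `α_λ` associated with a left weight: `α_λ(v) = λ(s(v),v)`. -/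
def pwOf (l : PathIn V → PathIn V → ℝ) (v : PathIn V) : ℝ :=
  l (PathIn.ofVertex v.src) v

/-- `λ` is left-bounded at `w`, i.e. `λ(w) = sup_v λ(v,w) < ∞`. -/
def LeftBddAt (l : PathIn V → PathIn V → ℝ) (w : PathIn V) : Prop :=
  BddAbove (Set.range fun v => l v w)

/-- `λ` is left-bounded. -/
def LeftBdd (l : PathIn V → PathIn V → ℝ) : Prop := ∀ w, LeftBddAt l w

/-- `ρ` is right-bounded at `u`, i.e. `ρ(u) = sup_v ρ(v,u) < ∞`. -/
def RightBddAt (r : PathIn V → PathIn V → ℝ) (u : PathIn V) : Prop :=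
  BddAbove (Set.range fun v => r v u)

/-- `ρ` is right-bounded. -/
def RightBdd (r : PathIn V → PathIn V → ℝ) : Prop := ∀ u, RightBddAt r u

/-- `ρ` is a right companion to `λ`: it is a right weight and the pair
`(λ, ρ)` satisfies the commuting square condition at every `(w, u)`. -/
def IsRightCompanion (l r : PathIn V → PathIn V → ℝ) : Prop :=
  IsRightWeight r ∧
  ∀ w u v, PathIn.Comp w v → PathIn.Comp v u →
    r (PathIn.mul w v) u * l v w = l (PathIn.mul v u) w * r v u

/-- The Fock space `H_G = ℓ²(G⁺)` of the graph. -/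
abbrev FockSpace (V : Type u) [Quiver.{w} V] : Type _ := lp (fun _ : PathIn V => ℂ) 2

/-- The canonical orthonormal basis vector `ξ_v` of the Fock space. -/
def xi (v : PathIn V) : FockSpace V := lp.single 2 v 1

end


noncomputable section AuxLemmas

variable {V : Type u} [Quiver.{w} V]

namespace PathIn

lemma mul_src' {w v : PathIn V} (h : Comp w v) : (mul w v).src = v.src := by
  unfold mul; erw [dif_pos (show w.src = v.tgt from h)]; rfl

lemma mul_tgt' {w v : PathIn V} (h : Comp w v) : (mul w v).tgt = w.tgt := by
  unfold mul; erw [dif_pos (show w.src = v.tgt from h)]; rfl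

lemma mul_eq' {a b c : V} (p : Quiver.Path a b) (q : Quiver.Path c a) :
    mul ⟨a, b, p⟩ (⟨c, a, q⟩ : PathIn V) = ⟨c, b, q.comp p⟩ := by
  unfold mul
  simp only [src, tgt]
  split_ifs with h'
  · simp; rfl
  · exact absurd rfl h'

lemma mul_assoc' {w v u : PathIn V} (h1 : Comp w v) (h2 : Comp v u) :
    mul (mul w v) u = mul w (mul v u) := by
  obtain ⟨a, b, p⟩ := w
  obtain ⟨c, d, q⟩ := v
  obtain ⟨e, f, s⟩ := u
  simp only [Comp, src, tgt] at h1 h2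
  subst h1; subst h2
  rw [mul_eq', mul_eq', mul_eq', mul_eq', Quiver.Path.comp_assoc]

end PathIn

lemma xi_ext {T S : FockSpace V →L[ℂ] FockSpace V}
    (h : ∀ v : PathIn V, T (xi v) = S (xi v)) : T = S := by
  refine ContinuousLinearMap.ext fun f => ?_
  have hs := lp.hasSum_single (E := fun _ : PathIn V => ℂ) (p := 2) (by norm_num) f
  have h1 : HasSum (fun v : PathIn V => T (lp.single 2 v (f v))) (T f) := hs.mapL T
  have h2 : HasSum (fun v : PathIn V => S (lp.single 2 v (f v))) (S f) := hs.mapL S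
  refine h1.unique ?_
  have key : ∀ v : PathIn V, T (lp.single 2 v (f v)) = S (lp.single 2 v (f v)) := by
    intro v
    have hv : (lp.single 2 v (f v) : FockSpace V) = (f v) • xi v := by
      rw [xi, ← lp.single_smul, smul_eq_mul, mul_one]
    rw [hv, map_smul, map_smul, h v]
  simpa only [key] using h2

end AuxLemmas

/-- `R_(ρ,u)` commutes with `L_(λ,w)` iff the pair `(λ,ρ)`
satisfies the commuting square condition at `(w,u)`. -/
theorem commute_iff_commuting_square {V : Type u} [Quiver.{w} V] [Countable V] [∀ a b : V, Countable (a ⟶ b)]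
    (l r : PathIn V → PathIn V → ℝ)
    (hl : IsLeftWeight l) (hr : IsRightWeight r)
    (w u : PathIn V) (hbl : LeftBddAt l w) (hbr : RightBddAt r u)
    (L R : FockSpace V →L[ℂ] FockSpace V)
    (hL : ∀ v : PathIn V, L (xi v) =
      if PathIn.Comp w v then ((l v w : ℝ) : ℂ) • xi (PathIn.mul w v) else 0)
    (hR : ∀ v : PathIn V, R (xi v) =
      if PathIn.Comp v u then ((r v u : ℝ) : ℂ) • xi (PathIn.mul v u) else 0) :
    R.comp L = L.comp R ↔
      (∀ v : PathIn V, PathIn.Comp w v → PathIn.Comp v u →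
        r (PathIn.mul w v) u * l v w = l (PathIn.mul v u) w * r v u) := by
  constructor
  · intro hC v h1 h2
    have h2' : PathIn.Comp (PathIn.mul w v) u := by
      rw [PathIn.Comp, PathIn.mul_src' h1]; exact h2
    have h1' : PathIn.Comp w (PathIn.mul v u) := by
      rw [PathIn.Comp, PathIn.mul_tgt' h2]; exact h1
    have heq : (R.comp L) (xi v) = (L.comp R) (xi v) := by rw [hC]
    simp only [ContinuousLinearMap.comp_apply] at heq
    rw [hL v, if_pos h1, map_smul, hR (PathIn.mul w v), if_pos h2',
        hR v, if_pos h2, map_smul, hL (PathIn.mul v u), if_pos h1',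
        PathIn.mul_assoc' h1 h2] at heq
    have hxy := congrArg
      (fun g : FockSpace V => (g : ∀ _ : PathIn V, ℂ) (PathIn.mul w (PathIn.mul v u))) heq
    simp only [lp.coeFn_smul, Pi.smul_apply, xi, lp.single_apply_self, smul_eq_mul,
      mul_one] at hxy
    have : ((r (PathIn.mul w v) u * l v w : ℝ) : ℂ) =
        ((l (PathIn.mul v u) w * r v u : ℝ) : ℂ) := by
      push_cast
      linear_combination hxy
    exact_mod_cast this
  · intro hcs
    apply xi_ext
    intro v
    simp only [ContinuousLinearMap.comp_apply]
    by_cases h1 : PathIn.Comp w v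
    · by_cases h2 : PathIn.Comp v u
      · have h2' : PathIn.Comp (PathIn.mul w v) u := by
          rw [PathIn.Comp, PathIn.mul_src' h1]; exact h2
        have h1' : PathIn.Comp w (PathIn.mul v u) := by
          rw [PathIn.Comp, PathIn.mul_tgt' h2]; exact h1
        rw [hL v, if_pos h1, map_smul, hR (PathIn.mul w v), if_pos h2',
            hR v, if_pos h2, map_smul, hL (PathIn.mul v u), if_pos h1',
            PathIn.mul_assoc' h1 h2, smul_smul, smul_smul]
        congr 1
        have := hcs v h1 h2
        have : ((l v w * r (PathIn.mul w v) u : ℝ) : ℂ) =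
            ((r v u * l (PathIn.mul v u) w : ℝ) : ℂ) := by
          norm_cast
          linear_combination this
        push_cast at this
        exact this
      · have h2' : ¬ PathIn.Comp (PathIn.mul w v) u := by
          rw [PathIn.Comp, PathIn.mul_src' h1]; exact h2
        rw [hL v, if_pos h1, map_smul, hR (PathIn.mul w v), if_neg h2',
            hR v, if_neg h2, map_zero, smul_zero]
    · by_cases h2 : PathIn.Comp v u
      · have h1' : ¬ PathIn.Comp w (PathIn.mul v u) := by
          rw [PathIn.Comp, PathIn.mul_tgt' h2]; exact h1
        rw [hL v, if_neg h1, map_zero, hR v, if_pos h2, map_smul,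
            hL (PathIn.mul v u), if_neg h1', smul_zero]
      · rw [hL v, if_neg h1, map_zero, hR v, if_neg h2, map_zero]
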